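/- arXiv:1010.0453 — 6 statements merged into one kernel-verified Lean document; each statement's English description precedes it below -/
import Mathlib

section
/- For the binary search tree chain started at the one-vertex tree {∅}, the probability that the tree at time n equals a given rooted binary tree t with n vertices is ∏_{u ∈ t} (#t(u))⁻¹, where #t(u) is the number of vertices v of t with u ≤ v. -/
open Finset

/-- A finite rooted binary tree: a nonempty, prefix-closed finite set of words over
`{0,1}` (encoded as `List Bool`), containing the root `[]`. -/
def IsBinTree (t : Finset (List Bool)) : Prop :=
  ([] : List Bool) ∈ t ∧ ∀ v ∈ t, ∀ u : List Bool, u <+: v → u ∈ t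

/-- `subtreeCard t u = #t(u)`, the number of vertices `v ∈ t` with `u ≤ v`
(`u` a prefix of `v`). -/
def subtreeCard (t : Finset (List Bool)) (u : List Bool) : ℕ :=
  (t.filter (fun v => u <+: v)).card

/-!
With `h(t) = ∏_{u ∈ t} #t(u)⁻¹`, removing a leaf `u` lowers `#t(w)` by one exactly for the
strict prefixes `w` of `u`, so `h(t ∖ u) = h(t) · ∏_{w < u} #t(w) / (#t(w) - 1)`. By induction
on `n`, the backward equation of the chain then reduces to the identity
`∑_{leaves u ≥ c} ∏_{c ≤ w < u} #t(w) / (#t(w) - 1) = #t(c)`, which follows by induction on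
`#t(c)`: the leaves below `c` split between its two children, and `#t(c) = 1 + #t(c0) + #t(c1)`.
-/

namespace List

variable {α : Type*} {a b : α} {c u w : List α}

theorem IsPrefix.eq_or_append_singleton_prefix (h : c <+: u) :
    c = u ∨ ∃ a, c ++ [a] <+: u := by
  obtain ⟨s, rfl⟩ := h
  cases s with
  | nil => exact .inl (append_nil c).symm
  | cons a s => exact .inr ⟨a, s, by simp⟩

theorem eq_of_append_singleton_prefix (ha : c ++ [a] <+: u) (hb : c ++ [b] <+: u) : a = b := by
  simpa using prefix_of_prefix_length_le ha hb (by simp)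

theorem append_singleton_prefix_of_prefix (hcu : c ++ [a] <+: u) (hwu : w <+: u)
    (hcw : c <+: w) (hwc : w ≠ c) : c ++ [a] <+: w := by
  obtain rfl | ⟨b, hb⟩ := hcw.eq_or_append_singleton_prefix
  · exact absurd rfl hwc
  · obtain rfl := eq_of_append_singleton_prefix hcu (hb.trans hwu)
    exact hb

theorem not_append_singleton_prefix_self : ¬ c ++ [a] <+: c := fun h => by
  simpa using h.length_le

end List

theorem List.prefix_iff_eq_or_child_prefix {c u : List Bool} :
    c <+: u ↔ u = c ∨ c ++ [false] <+: u ∨ c ++ [true] <+: u := by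
  refine ⟨fun h => ?_, ?_⟩
  · obtain rfl | ⟨b, hb⟩ := h.eq_or_append_singleton_prefix
    · exact .inl rfl
    · cases b <;> simp [hb]
  · rintro (rfl | h | h)
    · exact prefix_rfl
    all_goals exact (prefix_append _ _).trans h

theorem sum_filter_prefix_eq_add {M : Type*} [AddCommMonoid M] (s : Finset (List Bool))
    (f : List Bool → M) (c : List Bool) :
    ∑ u ∈ s with c <+: u, f u = (if c ∈ s then f c else 0)
      + ∑ u ∈ s with c ++ [false] <+: u, f u + ∑ u ∈ s with c ++ [true] <+: u, f u := by
  rw [← sum_ite_eq' s c f, sum_filter, sum_filter, sum_filter, ← sum_add_distrib,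
    ← sum_add_distrib]
  refine sum_congr rfl fun u _ => ?_
  by_cases huc : u = c
  · subst huc
    simp [List.not_append_singleton_prefix_self]
  · have hft : ¬ (c ++ [false] <+: u ∧ c ++ [true] <+: u) := fun h =>
      Bool.false_ne_true (List.eq_of_append_singleton_prefix h.1 h.2)
    simp only [List.prefix_iff_eq_or_child_prefix (c := c) (u := u), huc, false_or]
    split_ifs <;> simp_all

section subtreeCard

variable {t : Finset (List Bool)} {c u w : List Bool}

theorem subtreeCard_nil (t : Finset (List Bool)) : subtreeCard t [] = #t := by
  simp [subtreeCard]

theorem subtreeCard_eq_zero_of_notMem (ht : IsBinTree t) (hc : c ∉ t) : subtreeCard t c = 0 :=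
  card_eq_zero.2 <| filter_eq_empty_iff.2 fun v hv hcv => hc (ht.2 v hv c hcv)

theorem two_le_subtreeCard (hc : c ∈ t) (hw : w ∈ t) (hcw : c <+: w) (hwc : w ≠ c) :
    2 ≤ subtreeCard t c :=
  one_lt_card.2 ⟨c, mem_filter.2 ⟨hc, List.prefix_rfl⟩, w, mem_filter.2 ⟨hw, hcw⟩, hwc.symm⟩

theorem subtreeCard_eq_one_add_add (hc : c ∈ t) :
    subtreeCard t c = 1 + subtreeCard t (c ++ [false]) + subtreeCard t (c ++ [true]) := by
  simp only [subtreeCard, card_eq_sum_ones]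
  rw [sum_filter_prefix_eq_add, if_pos hc]

theorem subtreeCard_erase_of_prefix (hu : u ∈ t) (hwu : w <+: u) :
    subtreeCard (t.erase u) w = subtreeCard t w - 1 := by
  rw [subtreeCard, filter_erase, card_erase_of_mem (mem_filter.2 ⟨hu, hwu⟩), subtreeCard]

theorem subtreeCard_erase_of_not_prefix (hwu : ¬ w <+: u) :
    subtreeCard (t.erase u) w = subtreeCard t w := by
  rw [subtreeCard, filter_erase, erase_eq_of_notMem (fun h => hwu (mem_filter.1 h).2),
    subtreeCard]

end subtreeCard

def leaves (t : Finset (List Bool)) : Finset (List Bool) :=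
  {u ∈ t | ∀ v ∈ t, u <+: v → v = u}

section leaves

variable {t : Finset (List Bool)} {u : List Bool}

theorem subtreeCard_eq_one_of_mem_leaves (hu : u ∈ leaves t) : subtreeCard t u = 1 := by
  obtain ⟨hut, hleaf⟩ := mem_filter.1 hu
  refine card_eq_one.2 ⟨u, eq_singleton_iff_unique_mem.2 ⟨?_, ?_⟩⟩
  · exact mem_filter.2 ⟨hut, List.prefix_rfl⟩
  · exact fun v hv => hleaf v (mem_filter.1 hv).1 (mem_filter.1 hv).2

theorem ne_nil_of_mem_leaves (ht : 1 < #t) (hu : u ∈ leaves t) : u ≠ [] := by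
  rintro rfl
  obtain ⟨a, ha, b, hb, hab⟩ := one_lt_card.1 ht
  have hleaf := (mem_filter.1 hu).2
  exact hab ((hleaf a ha List.nil_prefix).trans (hleaf b hb List.nil_prefix).symm)

theorem filter_ne_nil_leaf_eq_leaves (ht : 1 < #t) :
    t.filter (fun u => u ≠ [] ∧ ∀ v ∈ t, u <+: v → v = u) = leaves t :=
  filter_congr fun _ hu => and_iff_right_of_imp fun hleaf =>
    ne_nil_of_mem_leaves ht (mem_filter.2 ⟨hu, hleaf⟩)

theorem IsBinTree.erase_of_mem_leaves (ht : IsBinTree t) (hu : u ∈ leaves t) (hne : u ≠ []) :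
    IsBinTree (t.erase u) := by
  obtain ⟨hut, hleaf⟩ := mem_filter.1 hu
  refine ⟨mem_erase.2 ⟨hne.symm, ht.1⟩, fun v hv w hwv => ?_⟩
  have hvt := mem_of_mem_erase hv
  refine mem_erase.2 ⟨?_, ht.2 v hvt w hwv⟩
  rintro rfl
  exact ne_of_mem_erase hv (hleaf v hvt hwv)

end leaves

noncomputable def hookProduct (t : Finset (List Bool)) : ℝ :=
  ∏ u ∈ t, (subtreeCard t u : ℝ)⁻¹

noncomputable def hookRatio (t : Finset (List Bool)) (w : List Bool) : ℝ :=
  subtreeCard t w / (subtreeCard t w - 1)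

noncomputable def pathRatio (t : Finset (List Bool)) (c u : List Bool) : ℝ :=
  ∏ w ∈ t with c <+: w ∧ w <+: u ∧ w ≠ u, hookRatio t w

section hookProduct

variable {t : Finset (List Bool)} {b : Bool} {c u : List Bool}

theorem hookProduct_erase_of_mem_leaves (hu : u ∈ leaves t) :
    hookProduct (t.erase u) = hookProduct t * pathRatio t [] u := by
  have hut := mem_of_mem_filter u hu
  have hfactor : ∀ w ∈ t.erase u, (subtreeCard (t.erase u) w : ℝ)⁻¹
      = (subtreeCard t w : ℝ)⁻¹ * if w <+: u then hookRatio t w else 1 := by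
    intro w hw
    split_ifs with hwu
    · have h2 := two_le_subtreeCard (mem_of_mem_erase hw) hut hwu (ne_of_mem_erase hw).symm
      have h2' : (2 : ℝ) ≤ subtreeCard t w := by exact_mod_cast h2
      rw [subtreeCard_erase_of_prefix hut hwu, Nat.cast_sub (by omega), hookRatio]
      field_simp [show (subtreeCard t w : ℝ) - 1 ≠ 0 by linarith]
      simp
    · rw [subtreeCard_erase_of_not_prefix hwu, mul_one]
  have hpath : (t.erase u).filter (· <+: u) = t.filter (fun w => [] <+: w ∧ w <+: u ∧ w ≠ u) := by
    ext w
    simp only [mem_filter, mem_erase, List.nil_prefix, true_and]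
    tauto
  rw [hookProduct, prod_congr rfl hfactor, prod_mul_distrib, ← prod_filter, hpath, hookProduct,
    ← mul_prod_erase t _ hut, subtreeCard_eq_one_of_mem_leaves hu, Nat.cast_one, inv_one,
    one_mul, pathRatio]

theorem pathRatio_self (t : Finset (List Bool)) (u : List Bool) : pathRatio t u u = 1 :=
  prod_eq_one fun w hw => by
    obtain ⟨-, huw, hwu, hne⟩ := mem_filter.1 hw
    exact absurd (hwu.eq_of_length (le_antisymm hwu.length_le huw.length_le)) hne

theorem pathRatio_of_append_singleton_prefix (hc : c ∈ t) (h : c ++ [b] <+: u) :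
    pathRatio t c u = hookRatio t c * pathRatio t (c ++ [b]) u := by
  have hnotMem : c ∉ t.filter (fun w => c ++ [b] <+: w ∧ w <+: u ∧ w ≠ u) := fun hc' =>
    List.not_append_singleton_prefix_self (mem_filter.1 hc').2.1
  rw [pathRatio, pathRatio, ← prod_insert hnotMem]
  congr 1
  ext w
  simp only [mem_filter, mem_insert]
  constructor
  · rintro ⟨hw, hcw, hwu, hne⟩
    by_cases hwc : w = c
    · exact .inl hwc
    · exact .inr ⟨hw, List.append_singleton_prefix_of_prefix h hwu hcw hwc, hwu, hne⟩
  · rintro (rfl | ⟨hw, hcw, hwu, hne⟩)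
    · refine ⟨hc, List.prefix_rfl, (List.prefix_append _ _).trans h, fun hcu => ?_⟩
      exact List.not_append_singleton_prefix_self (hcu ▸ h)
    · exact ⟨hw, (List.prefix_append _ _).trans hcw, hwu, hne⟩

theorem sum_pathRatio_leaves (ht : IsBinTree t) (c : List Bool) :
    ∑ u ∈ leaves t with c <+: u, pathRatio t c u = subtreeCard t c := by
  induction hm : subtreeCard t c using Nat.strong_induction_on generalizing c with
  | _ m ih =>
    by_cases hc : c ∈ t
    swap
    · rw [← hm, subtreeCard_eq_zero_of_notMem ht hc, Nat.cast_zero]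
      refine sum_eq_zero fun u hu => absurd ?_ hc
      exact ht.2 u (mem_of_mem_filter u (mem_of_mem_filter u hu)) c (mem_filter.1 hu).2
    by_cases hleaf : c ∈ leaves t
    · have hsingleton : {u ∈ leaves t | c <+: u} = {c} := by
        refine eq_singleton_iff_unique_mem.2 ⟨mem_filter.2 ⟨hleaf, List.prefix_rfl⟩, fun u hu => ?_⟩
        obtain ⟨hu, hcu⟩ := mem_filter.1 hu
        exact (mem_filter.1 hleaf).2 u (mem_of_mem_filter u hu) hcu
      rw [hsingleton, sum_singleton, pathRatio_self, ← hm, subtreeCard_eq_one_of_mem_leaves hleaf,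
        Nat.cast_one]
    obtain ⟨v, hv, hcv, hvc⟩ : ∃ v ∈ t, c <+: v ∧ v ≠ c := by
      simpa [leaves, hc] using hleaf
    have hm2 : (2 : ℝ) ≤ m := by exact_mod_cast hm ▸ two_le_subtreeCard hc hv hcv hvc
    have hsplit := subtreeCard_eq_one_add_add hc
    have hchild : ∀ b : Bool, ∑ u ∈ leaves t with c ++ [b] <+: u, pathRatio t c u
        = hookRatio t c * subtreeCard t (c ++ [b]) := by
      intro b
      rw [← ih _ (by cases b <;> omega) _ rfl, mul_sum]
      exact sum_congr rfl fun u hu => pathRatio_of_append_singleton_prefix hc (mem_filter.1 hu).2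
    rw [sum_filter_prefix_eq_add, if_neg hleaf, zero_add, hchild, hchild, ← mul_add, hookRatio, hm]
    have hcast : (subtreeCard t (c ++ [false]) : ℝ) + subtreeCard t (c ++ [true]) = m - 1 := by
      rw [← hm, hsplit]
      push_cast
      ring
    rw [hcast]
    field_simp [show (m : ℝ) - 1 ≠ 0 by linarith]

theorem sum_hookProduct_erase_leaves (ht : IsBinTree t) :
    ∑ u ∈ leaves t, hookProduct (t.erase u) = #t * hookProduct t := by
  have hroot := sum_pathRatio_leaves ht []
  rw [filter_true_of_mem fun u _ => List.nil_prefix, subtreeCard_nil] at hroot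
  rw [sum_congr rfl fun u hu => hookProduct_erase_of_mem_leaves hu, ← mul_sum, hroot, mul_comm]

end hookProduct

theorem bst_time_n_distribution_general
    (P : ℕ → Finset (List Bool) → ℝ)
    (hbase : ∀ t, P 1 t = if t = {([] : List Bool)} then 1 else 0)
    (hstep : ∀ n, 1 ≤ n → ∀ t : Finset (List Bool), IsBinTree t →
      P (n + 1) t
        = ∑ u ∈ t.filter (fun u => u ≠ [] ∧ ∀ v ∈ t, u <+: v → v = u),
            P n (t.erase u) * (1 / ((t.erase u).card + 1 : ℝ)))
    (n : ℕ) (t : Finset (List Bool)) (ht : IsBinTree t)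
    (hcard : t.card = n) :
    P n t = ∏ u ∈ t, ((subtreeCard t u : ℝ))⁻¹ := by
  have hn : 1 ≤ n := hcard ▸ card_pos.2 ⟨[], ht.1⟩
  induction n, hn using Nat.le_induction generalizing t with
  | base =>
    obtain ⟨a, rfl⟩ := card_eq_one.1 hcard
    obtain rfl : [] = a := mem_singleton.1 ht.1
    simp [hbase, subtreeCard_nil]
  | succ n hn ih =>
    have hterm : ∀ u ∈ leaves t, P n (t.erase u) * (1 / ((t.erase u).card + 1 : ℝ))
        = hookProduct (t.erase u) / (n + 1) := by
      intro u hu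
      have hcard' : #(t.erase u) = n := by rw [card_erase_of_mem (mem_of_mem_filter u hu)]; omega
      have hsub := ht.erase_of_mem_leaves hu (ne_nil_of_mem_leaves (by omega) hu)
      rw [ih _ hsub hcard', hookProduct, hcard', mul_one_div]
    rw [hstep n hn t ht, filter_ne_nil_leaf_eq_leaves (by omega), sum_congr rfl hterm, ← sum_div,
      sum_hookProduct_erase_leaves ht, hcard, hookProduct]
    push_cast
    field_simp

/-- **Uniform marginal formula for the binary search tree chain.**
`P n t` is the probability that the BST chain started at the one-vertex tree `{[]}`
(at time 1) equals the tree `t` at time `n`.  The chain moves from a tree `s` to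
`s ⊔ {u}` for a uniformly chosen external vertex `u`, i.e. with probability
`1/(#s+1)`; equivalently, backwards, `P (n+1) t` is the sum over non-root leaves `u`
of `t` of `P n (t.erase u) · 1/(#(t.erase u)+1)`.
Conclusion: for a rooted binary tree `t` with `n` vertices,
`P n t = ∏_{u ∈ t} (#t(u))⁻¹`. -/
theorem bst_time_n_distribution
    (P : ℕ → Finset (List Bool) → ℝ)
    (hbase : ∀ t, P 1 t = if t = {([] : List Bool)} then 1 else 0)
    (hstep : ∀ n, 1 ≤ n → ∀ t : Finset (List Bool), IsBinTree t →
      P (n + 1) t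
        = ∑ u ∈ t.filter (fun u => u ≠ [] ∧ ∀ v ∈ t, u <+: v → v = u),
            P n (t.erase u) * (1 / ((t.erase u).card + 1 : ℝ)))
    (n : ℕ) (hn : 1 ≤ n) (t : Finset (List Bool)) (ht : IsBinTree t)
    (hcard : t.card = n) :
    P n t = ∏ u ∈ t, ((subtreeCard t u : ℝ))⁻¹ :=
  bst_time_n_distribution_general P hbase hstep n t ht hcard
end

section
/- For the BST chain and rooted binary trees s ⊆ t, the probability that the chain started at s ever equals t is C(#t, #s)⁻¹ · ∏_{v ∈ t∖s} (#t(v))⁻¹. -/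
open Finset

/-- The external vertices of a finite rooted binary tree `s`: words not in `s` whose
parent belongs to `s`. -/
def extVerts (s : Finset (List Bool)) : Finset (List Bool) :=
  (s.image (fun u => u ++ [true]) ∪ s.image (fun u => u ++ [false])) \ s

/-!
Induct on `#(t \ s)`. The right-hand side satisfies the same one-step recursion as the
hitting probability, once the sum is restricted to the external vertices `u ∈ t`. Inserting
`u` contributes the factor `#t(u) · C(#t, #s) / ((#s + 1) · C(#t, #s + 1))`, and the factors
`#t(u)` add up to `#(t \ s)`: every vertex of `t \ s` lies above exactly one external vertex
of `s`. Since `(#t - #s) · C(#t, #s) = (#s + 1) · C(#t, #s + 1)`, the recursion closes.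
-/

lemma mem_extVerts {s : Finset (List Bool)} {u : List Bool} :
    u ∈ extVerts s ↔ u ∉ s ∧ ∃ p ∈ s, ∃ b : Bool, u = p ++ [b] := by
  simp only [extVerts, mem_sdiff, mem_union, mem_image]
  constructor
  · rintro ⟨⟨p, hp, rfl⟩ | ⟨p, hp, rfl⟩, hu⟩
    · exact ⟨hu, p, hp, true, rfl⟩
    · exact ⟨hu, p, hp, false, rfl⟩
  · rintro ⟨hu, p, hp, b, rfl⟩
    cases b
    exacts [⟨Or.inr ⟨p, hp, rfl⟩, hu⟩, ⟨Or.inl ⟨p, hp, rfl⟩, hu⟩]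

namespace IsBinTree

variable {s : Finset (List Bool)}

lemma insert_of_mem_extVerts (hs : IsBinTree s) {u : List Bool} (hu : u ∈ extVerts s) :
    IsBinTree (insert u s) := by
  obtain ⟨-, p, hp, b, rfl⟩ := mem_extVerts.1 hu
  refine ⟨mem_insert_of_mem hs.1, fun v hv w hwv => ?_⟩
  rcases mem_insert.1 hv with rfl | hv
  · rcases List.prefix_concat_iff.1 hwv with rfl | hwp
    · exact mem_insert_self _ _
    · exact mem_insert_of_mem (hs.2 p hp w hwp)
  · exact mem_insert_of_mem (hs.2 v hv w hwv)

lemma exists_mem_extVerts_prefix (hs : IsBinTree s) {v : List Bool} (hv : v ∉ s) :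
    ∃ u ∈ extVerts s, u <+: v := by
  induction v using List.reverseRecOn with
  | nil => exact absurd hs.1 hv
  | append_singleton w b ih =>
    by_cases hw : w ∈ s
    · exact ⟨w ++ [b], mem_extVerts.2 ⟨hv, w, hw, b, rfl⟩, List.prefix_refl _⟩
    · obtain ⟨u, hu, huw⟩ := ih hw
      exact ⟨u, hu, huw.trans (List.prefix_append _ _)⟩

lemma eq_of_mem_extVerts_of_prefix (hs : IsBinTree s) {u u' : List Bool}
    (hu : u ∈ extVerts s) (hu' : u' ∈ extVerts s) (huu' : u <+: u') : u = u' := by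
  obtain ⟨-, p, hp, b, rfl⟩ := mem_extVerts.1 hu'
  rcases List.prefix_concat_iff.1 huu' with rfl | hup
  · rfl
  · exact absurd (hs.2 p hp u hup) (mem_extVerts.1 hu).1

lemma card_sdiff_eq_sum_subtreeCard (hs : IsBinTree s) {t : Finset (List Bool)}
    (ht : IsBinTree t) : #(t \ s) = ∑ u ∈ extVerts s ∩ t, subtreeCard t u := by
  have hcover : t \ s = (extVerts s ∩ t).biUnion fun u => t.filter (u <+: ·) := by
    ext v
    simp only [mem_sdiff, mem_biUnion, mem_inter, mem_filter]
    constructor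
    · rintro ⟨hvt, hvs⟩
      obtain ⟨u, hu, huv⟩ := hs.exists_mem_extVerts_prefix hvs
      exact ⟨u, ⟨hu, ht.2 v hvt u huv⟩, hvt, huv⟩
    · rintro ⟨u, ⟨hu, -⟩, hvt, huv⟩
      exact ⟨hvt, fun hvs => (mem_extVerts.1 hu).1 (hs.2 v hvs u huv)⟩
  have hdisj : ((extVerts s ∩ t : Finset (List Bool)) : Set (List Bool)).PairwiseDisjoint
      fun u => t.filter (u <+: ·) := by
    intro u hu u' hu' hne
    refine disjoint_filter.2 fun v _ huv hu'v => hne ?_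
    have hu := (mem_inter.1 (mem_coe.1 hu)).1
    have hu' := (mem_inter.1 (mem_coe.1 hu')).1
    rcases List.prefix_or_prefix_of_prefix huv hu'v with h | h
    · exact hs.eq_of_mem_extVerts_of_prefix hu hu' h
    · exact (hs.eq_of_mem_extVerts_of_prefix hu' hu h).symm
  rw [hcover, card_biUnion hdisj]
  rfl

end IsBinTree

noncomputable def hitFormula (s t : Finset (List Bool)) : ℝ :=
  ((#t).choose #s : ℝ)⁻¹ * ∏ v ∈ t \ s, (subtreeCard t v : ℝ)⁻¹

lemma subtreeCard_pos {t : Finset (List Bool)} {u : List Bool} (hu : u ∈ t) :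
    0 < subtreeCard t u :=
  card_pos.2 ⟨u, mem_filter.2 ⟨hu, u.prefix_refl⟩⟩

lemma mem_sdiff_of_mem_extVerts {s t : Finset (List Bool)} {u : List Bool}
    (hu : u ∈ extVerts s ∩ t) : u ∈ t \ s :=
  mem_sdiff.2 ⟨(mem_inter.1 hu).2, (mem_extVerts.1 (mem_inter.1 hu).1).1⟩

lemma hitFormula_insert {s t : Finset (List Bool)} {u : List Bool} (hu : u ∈ t \ s) :
    hitFormula (insert u s) t = ((#t).choose (#s + 1) : ℝ)⁻¹ *
      (subtreeCard t u * ∏ v ∈ t \ s, (subtreeCard t v : ℝ)⁻¹) := by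
  have hsub : (subtreeCard t u : ℝ) ≠ 0 := by
    have := subtreeCard_pos (mem_sdiff.1 hu).1
    positivity
  rw [hitFormula, card_insert_of_notMem (mem_sdiff.1 hu).2, sdiff_insert,
    ← mul_prod_erase _ _ hu, mul_inv_cancel_left₀ hsub]

lemma hitFormula_eq_sum {s t : Finset (List Bool)} (hs : IsBinTree s) (ht : IsBinTree t)
    (hst : s ⊆ t) (hne : s ≠ t) :
    hitFormula s t =
      ∑ u ∈ extVerts s ∩ t, 1 / (#s + 1 : ℝ) * hitFormula (insert u s) t := by
  rw [hitFormula]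
  set k := #s
  set N := #t
  set P := ∏ v ∈ t \ s, (subtreeCard t v : ℝ)⁻¹
  have hk : k < N := card_lt_card (hst.ssubset_of_ne hne)
  have hchoose : (N.choose (k + 1) : ℝ) * (k + 1) = N.choose k * (N - k : ℕ) := by
    exact_mod_cast Nat.choose_succ_right_eq N k
  have hpos : (0 : ℝ) < N.choose k := by exact_mod_cast Nat.choose_pos hk.le
  have hpos' : (0 : ℝ) < N.choose (k + 1) := by exact_mod_cast Nat.choose_pos hk
  calc (N.choose k : ℝ)⁻¹ * P
      = (N - k : ℕ) * (1 / (k + 1 : ℝ) * (N.choose (k + 1) : ℝ)⁻¹ * P) := by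
        field_simp
        linear_combination P * hchoose
    _ = (∑ u ∈ extVerts s ∩ t, (subtreeCard t u : ℝ)) *
          (1 / (k + 1 : ℝ) * (N.choose (k + 1) : ℝ)⁻¹ * P) := by
        rw [← card_sdiff_of_subset hst, hs.card_sdiff_eq_sum_subtreeCard ht, Nat.cast_sum]
    _ = _ := by
        rw [sum_mul]
        refine sum_congr rfl fun u hu => ?_
        rw [hitFormula_insert (mem_sdiff_of_mem_extVerts hu)]
        ring

/-- **Hitting probabilities of the binary search tree chain.**
`hit s t` is the probability that the BST chain started at the rooted binary tree `s`
ever equals `t`.  The BST chain moves from `s` to `insert u s` for a uniformly chosen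
external vertex `u` of `s` (probability `1/(#s+1)` each).  Conclusion: for rooted
binary trees `s ⊆ t`,
`hit s t = C(#t, #s)⁻¹ · ∏_{v ∈ t∖s} (#t(v))⁻¹`. -/
theorem bst_hitting_probability
    (hit : Finset (List Bool) → Finset (List Bool) → ℝ)
    (hself : ∀ t, hit t t = 1)
    (hzero : ∀ s t, ¬ s ⊆ t → hit s t = 0)
    (hrec : ∀ s t : Finset (List Bool), IsBinTree s → s ≠ t →
      hit s t = ∑ u ∈ extVerts s, (1 / (s.card + 1 : ℝ)) * hit (insert u s) t)
    (s t : Finset (List Bool)) (hs : IsBinTree s) (ht : IsBinTree t) (hst : s ⊆ t) :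
    hit s t = ((t.card.choose s.card : ℝ))⁻¹ * ∏ v ∈ t \ s, ((subtreeCard t v : ℝ))⁻¹ := by
  change hit s t = hitFormula s t
  induction hn : #(t \ s) generalizing s with
  | zero =>
    obtain rfl : s = t := hst.antisymm (sdiff_eq_empty_iff_subset.1 (card_eq_zero.1 hn))
    simp [hitFormula, hself]
  | succ n ih =>
    have hne : s ≠ t := by rintro rfl; simp at hn
    rw [hrec s t hs hne, hitFormula_eq_sum hs ht hst hne, ← sum_subset inter_subset_left]
    · refine sum_congr rfl fun u hu => ?_
      obtain ⟨hue, hut⟩ := mem_inter.1 hu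
      have hn' : #(t \ insert u s) = n := by
        rw [sdiff_insert, card_erase_of_mem (mem_sdiff_of_mem_extVerts hu), hn,
          Nat.add_sub_cancel]
      rw [ih (insert u s) (hs.insert_of_mem_extVerts hue) (insert_subset hut hst) hn']
    · intro u hu hut
      rw [hzero _ _ fun h => hut (mem_inter.2 ⟨hu, h (mem_insert_self u s)⟩), mul_zero]
end

section
/- The digital search tree process is the Doob h-transform of the binary search tree process with respect to the harmonic function h(s) = (#s)! ∏_{u∈s} 2^{-|u|}: that is, for trees t = s ⊔ {u} with u external in s, h(s)⁻¹ · (1/(#s+1)) · h(t) = 2^{-|u|}, where |u| is the length of the word u. -/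
open Finset

lemma notMem_of_mem_extVerts {s : Finset (List Bool)} {u : List Bool} (hu : u ∈ extVerts s) :
    u ∉ s :=
  (mem_sdiff.mp hu).2

lemma factorial_mul_prod_insert_div {α 𝕜 : Type*} [DecidableEq α] [Field 𝕜] [CharZero 𝕜]
    (μ : α → 𝕜) {s : Finset α} {u : α} (hu : u ∉ s) (hμ : ∀ v ∈ s, μ v ≠ 0) :
    (((#s).factorial : 𝕜) * ∏ v ∈ s, μ v)⁻¹ * (1 / (#s + 1 : 𝕜)) *
      (((#(insert u s)).factorial : 𝕜) * ∏ v ∈ insert u s, μ v) = μ u := by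
  have hprod : ∏ v ∈ s, μ v ≠ 0 := prod_ne_zero_iff.mpr hμ
  have hfact : ((#s).factorial : 𝕜) ≠ 0 := Nat.cast_ne_zero.mpr (Nat.factorial_ne_zero _)
  rw [card_insert_of_notMem hu, prod_insert hu, Nat.factorial_succ]
  push_cast
  field_simp

theorem dst_is_h_transform_of_bst_general
    (h : Finset (List Bool) → ℝ)
    (hdef : ∀ s : Finset (List Bool),
      h s = (s.card.factorial : ℝ) * ∏ v ∈ s, (2 : ℝ) ^ (-(v.length : ℤ)))
    (s : Finset (List Bool)) (u : List Bool) (hu : u ∈ extVerts s) :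
    (h s)⁻¹ * (1 / (s.card + 1 : ℝ)) * h (insert u s) = (2 : ℝ) ^ (-(u.length : ℤ)) := by
  rw [hdef, hdef]
  exact factorial_mul_prod_insert_div _ (notMem_of_mem_extVerts hu)
    fun v _ => zpow_ne_zero _ two_ne_zero

/-- **The DST process is the Doob h-transform of the BST process** with respect to the
harmonic function `h(s) = (#s)! ∏_{u∈s} 2^{-|u|}` (fair coin-tossing measure): for a
rooted binary tree `s` and an external vertex `u` of `s` (so `t = s ⊔ {u}`),
`h(s)⁻¹ · (1/(#s+1)) · h(t) = 2^{-|u|}`, the DST transition probability,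
where `|u|` is the length of the word `u`. -/
theorem dst_is_h_transform_of_bst
    (h : Finset (List Bool) → ℝ)
    (hdef : ∀ s : Finset (List Bool),
      h s = (s.card.factorial : ℝ) * ∏ v ∈ s, (2 : ℝ) ^ (-(v.length : ℤ)))
    (s : Finset (List Bool)) (hs : IsBinTree s) (u : List Bool) (hu : u ∈ extVerts s) :
    (h s)⁻¹ * (1 / (s.card + 1 : ℝ)) * h (insert u s) = (2 : ℝ) ^ (-(u.length : ℤ)) :=
  dst_is_h_transform_of_bst_general h hdef s u hu
end

section
/- For the Mallows urn chain with parameter p, the Martin kernel with reference state (0,0) is K((i,j),(k,ℓ)) = (1−p)^{-i} if i ≤ k and j = 0; K((i,j),(k,ℓ)) = (1−p)^{-i} p^{-1} if i = k and 1 ≤ j ≤ ℓ; and K((i,j),(k,ℓ)) = 0 otherwise. -/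
/-!
Off row `0` the urn only climbs its column, so from `(a, b)` with `b ≥ 1` it hits `(k, l)`
exactly when `a = k` and `b ≤ l`. Along row `0`, the step up from `(a, 0)` with `a < k` leaves
column `k` forever, so `hit (a, 0) (k, l) = (1 - p) ^ (k - a) * hit (k, 0) (k, l)`. The common
factor `hit (k, 0) (k, l)` (which is `1` or `p`) cancels in the Martin kernel.
-/

namespace MallowsUrn

structure HittingEqns (p : ℝ) (hit : ℕ × ℕ → ℕ × ℕ → ℝ) : Prop where
  self : ∀ x, hit x x = 1
  eq_zero_of_not_le : ∀ x y, ¬(x.1 ≤ y.1 ∧ x.2 ≤ y.2) → hit x y = 0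
  row : ∀ i : ℕ, ∀ y : ℕ × ℕ, (i, 0) ≠ y →
    hit (i, 0) y = (1 - p) * hit (i + 1, 0) y + p * hit (i, 1) y
  col : ∀ i j : ℕ, ∀ y : ℕ × ℕ, (i, j + 1) ≠ y → hit (i, j + 1) y = hit (i, j + 2) y

namespace HittingEqns

variable {p : ℝ} {hit : ℕ × ℕ → ℕ × ℕ → ℝ}

theorem hit_col_add (h : HittingEqns p hit) {a b : ℕ} {y : ℕ × ℕ} :
    ∀ n, (∀ m < n, (a, b + 1 + m) ≠ y) → hit (a, b + 1) y = hit (a, b + 1 + n) y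
  | 0, _ => rfl
  | n + 1, hy => by
    have step := h.col a (b + n) y (by convert hy n (by omega) using 2; omega)
    rw [h.hit_col_add n fun m hm => hy m (by omega)]
    convert step using 3 <;> omega

theorem hit_col (h : HittingEqns p hit) {a b k l : ℕ} (hb : 1 ≤ b) :
    hit (a, b) (k, l) = if a = k ∧ b ≤ l then 1 else 0 := by
  obtain ⟨b, rfl⟩ : ∃ b', b = b' + 1 := ⟨b - 1, by omega⟩
  by_cases hak : a = k
  · subst hak
    by_cases hbl : b + 1 ≤ l
    · rw [if_pos ⟨rfl, hbl⟩,
        h.hit_col_add (l - (b + 1)) fun m hm => by simp only [ne_eq, Prod.ext_iff]; omega]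
      convert h.self (a, l) using 3
      omega
    · rw [if_neg (by omega)]
      exact h.eq_zero_of_not_le _ _ (by dsimp only; omega)
  · rw [if_neg (by omega), h.hit_col_add (l - b) fun m _ => by simp [hak]]
    exact h.eq_zero_of_not_le _ _ (by dsimp only; omega)

theorem hit_row_step (h : HittingEqns p hit) {a k l : ℕ} (hak : a < k) :
    hit (a, 0) (k, l) = (1 - p) * hit (a + 1, 0) (k, l) := by
  rw [h.row a _ (by simp only [ne_eq, Prod.ext_iff]; omega), h.hit_col le_rfl,
    if_neg (by omega)]
  ring

theorem hit_row (h : HittingEqns p hit) {a n k l : ℕ} (hank : a + n = k) :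
    hit (a, 0) (k, l) = (1 - p) ^ n * hit (k, 0) (k, l) := by
  induction n generalizing a with
  | zero => simp [← hank]
  | succ n ih =>
    rw [h.hit_row_step (by omega), ih (by omega), pow_succ]
    ring

theorem hit_corner_of_pos (h : HittingEqns p hit) {k l : ℕ} (hl : 0 < l) :
    hit (k, 0) (k, l) = p := by
  rw [h.row k _ (by simp only [ne_eq, Prod.ext_iff]; omega),
    h.eq_zero_of_not_le _ _ (by dsimp only; omega), h.hit_col le_rfl, if_pos ⟨rfl, hl⟩]
  ring

theorem hit_corner_ne_zero (h : HittingEqns p hit) (hp : 0 < p) (k l : ℕ) :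
    hit (k, 0) (k, l) ≠ 0 := by
  rcases Nat.eq_zero_or_pos l with rfl | hl
  · simp [h.self]
  · rw [h.hit_corner_of_pos hl]
    exact hp.ne'

end HittingEqns

end MallowsUrn

open MallowsUrn in
theorem mallows_urn_martin_kernel_general
    (p : ℝ) (hp0 : 0 < p) (hp1 : p < 1)
    (hit : ℕ × ℕ → ℕ × ℕ → ℝ)
    (hself : ∀ x, hit x x = 1)
    (hzero : ∀ x y, ¬(x.1 ≤ y.1 ∧ x.2 ≤ y.2) → hit x y = 0)
    (hrec0 : ∀ i : ℕ, ∀ y : ℕ × ℕ, (i, 0) ≠ y →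
      hit (i, 0) y = (1 - p) * hit (i + 1, 0) y + p * hit (i, 1) y)
    (hrecj : ∀ i j : ℕ, ∀ y : ℕ × ℕ, (i, j + 1) ≠ y →
      hit (i, j + 1) y = hit (i, j + 2) y)
    (i j k l : ℕ) :
    (i ≤ k ∧ j = 0 →
      hit (i, j) (k, l) / hit (0, 0) (k, l) = (1 - p) ^ (-(i : ℤ)))
    ∧ (i = k ∧ 1 ≤ j ∧ j ≤ l →
      hit (i, j) (k, l) / hit (0, 0) (k, l) = (1 - p) ^ (-(i : ℤ)) * p⁻¹)
    ∧ (¬(i ≤ k ∧ j = 0) ∧ ¬(i = k ∧ 1 ≤ j ∧ j ≤ l) →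
      hit (i, j) (k, l) / hit (0, 0) (k, l) = 0) := by
  have h : HittingEqns p hit := ⟨hself, hzero, hrec0, hrecj⟩
  have hq : 1 - p ≠ 0 := by linarith
  have h00 : hit (0, 0) (k, l) = (1 - p) ^ k * hit (k, 0) (k, l) := h.hit_row (zero_add k)
  refine ⟨?_, ?_, ?_⟩
  · rintro ⟨hik, rfl⟩
    rw [h.hit_row (Nat.add_sub_cancel' hik), h00,
      mul_div_mul_right _ _ (h.hit_corner_ne_zero hp0 k l), ← zpow_natCast, ← zpow_natCast,
      ← zpow_sub₀ hq, Nat.cast_sub hik]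
    congr 1; ring
  · rintro ⟨rfl, hj, hjl⟩
    rw [h.hit_col hj, if_pos ⟨rfl, hjl⟩, h00, h.hit_corner_of_pos (by omega), one_div, mul_inv,
      zpow_neg, zpow_natCast]
  · rintro ⟨hnot_row, hnot_col⟩
    suffices hit (i, j) (k, l) = 0 by rw [this, zero_div]
    rcases Nat.eq_zero_or_pos j with rfl | hj
    · exact h.eq_zero_of_not_le _ _ (by dsimp only; omega)
    · rw [h.hit_col hj, if_neg (by omega)]

/-- **Martin kernel of the Mallows urn** with reference state `(0,0)`.
With `hit` the hitting probability of the Mallows urn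
(transitions `(i,0) → (i+1,0)` w.p. `1−p`, `(i,0) → (i,1)` w.p. `p`,
`(i,j) → (i,j+1)` w.p. `1` for `j ≥ 1`), the Martin kernel
`K((i,j),(k,ℓ)) = hit (i,j) (k,ℓ) / hit (0,0) (k,ℓ)` equals `(1−p)^{-i}` if
`i ≤ k` and `j = 0`; equals `(1−p)^{-i} p⁻¹` if `i = k` and `1 ≤ j ≤ ℓ`; and
equals `0` otherwise. -/
theorem mallows_urn_martin_kernel
    (p : ℝ) (hp0 : 0 < p) (hp1 : p < 1)
    (hit : ℕ × ℕ → ℕ × ℕ → ℝ)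
    (hbdd : ∀ x y, 0 ≤ hit x y ∧ hit x y ≤ 1)
    (hself : ∀ x, hit x x = 1)
    (hzero : ∀ x y, ¬(x.1 ≤ y.1 ∧ x.2 ≤ y.2) → hit x y = 0)
    (hrec0 : ∀ i : ℕ, ∀ y : ℕ × ℕ, (i, 0) ≠ y →
      hit (i, 0) y = (1 - p) * hit (i + 1, 0) y + p * hit (i, 1) y)
    (hrecj : ∀ i j : ℕ, ∀ y : ℕ × ℕ, (i, j + 1) ≠ y →
      hit (i, j + 1) y = hit (i, j + 2) y)
    (i j k l : ℕ) :
    (i ≤ k ∧ j = 0 →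
      hit (i, j) (k, l) / hit (0, 0) (k, l) = (1 - p) ^ (-(i : ℤ)))
    ∧ (i = k ∧ 1 ≤ j ∧ j ≤ l →
      hit (i, j) (k, l) / hit (0, 0) (k, l) = (1 - p) ^ (-(i : ℤ)) * p⁻¹)
    ∧ (¬(i ≤ k ∧ j = 0) ∧ ¬(i = k ∧ 1 ≤ j ∧ j ≤ l) →
      hit (i, j) (k, l) / hit (0, 0) (k, l) = 0) :=
  mallows_urn_martin_kernel_general p hp0 hp1 hit hself hzero hrec0 hrecj i j k l
end

section
/- For the q-binomial urn chain on ℕ₀×ℕ₀ with parameters 0 < q < 1, 0 < r < 1, the probability of hitting (k,ℓ) from (i,j) (i ≤ k, j ≤ ℓ) equals the q-binomial coefficient binom{(k−i)+(ℓ−j)}{k−i}_q times (r q^j)^{k−i} (1 − r q^j)(1 − r q^{j+1})⋯(1 − r q^{ℓ−1}). -/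
/-!
The hitting probability is determined by the one-step recurrence and its boundary values, so it
suffices to check that the claimed formula satisfies the recurrence. A first step north multiplies
the weight of every later east step by `q`, so after dividing both terms of the recurrence by the
common path weight `(r qʲ)^(m+1) ∏_{s=j}^{j+n} (1 - r qˢ)` what is left is the q-Pascal rule for
the coefficients.
-/

open Finset

section QBinomial

variable {K : Type*} [Field K]

/-- The q-Pochhammer symbol `(q; q)ₙ`; it differs from the q-factorial `[n]_q!` by the factor
`(1 - q)ⁿ`, which cancels in `qBinomial`. -/
def qFactorial (q : K) (n : ℕ) : K := ∏ s ∈ Icc 1 n, (1 - q ^ s)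

def qBinomial (q : K) (m n : ℕ) : K := qFactorial q (m + n) / (qFactorial q m * qFactorial q n)

variable {q : K}

@[simp]
theorem qFactorial_zero : qFactorial q 0 = 1 := by
  simp [qFactorial]

theorem qFactorial_succ (n : ℕ) : qFactorial q (n + 1) = qFactorial q n * (1 - q ^ (n + 1)) :=
  prod_Icc_succ_top (by omega) _

theorem qFactorial_ne_zero (hq : ∀ s, 0 < s → q ^ s ≠ 1) (n : ℕ) : qFactorial q n ≠ 0 :=
  prod_ne_zero_iff.mpr fun s hs => sub_ne_zero.mpr (hq s (mem_Icc.mp hs).1).symm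

theorem qBinomial_zero_left (hq : ∀ s, 0 < s → q ^ s ≠ 1) (n : ℕ) :
    qBinomial q 0 n = 1 := by
  simp [qBinomial, qFactorial_ne_zero hq]

theorem qBinomial_zero_right (hq : ∀ s, 0 < s → q ^ s ≠ 1) (m : ℕ) :
    qBinomial q m 0 = 1 := by
  simp [qBinomial, qFactorial_ne_zero hq]

theorem qBinomial_succ_succ (hq : ∀ s, 0 < s → q ^ s ≠ 1) (m n : ℕ) :
    qBinomial q (m + 1) (n + 1) = qBinomial q m (n + 1) + q ^ (m + 1) * qBinomial q (m + 1) n := by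
  have hF := qFactorial_ne_zero hq
  have hm := sub_ne_zero.mpr (hq (m + 1) m.succ_pos).symm
  have hn := sub_ne_zero.mpr (hq (n + 1) n.succ_pos).symm
  simp only [qBinomial, show m + 1 + (n + 1) = m + n + 1 + 1 by omega,
    show m + (n + 1) = m + n + 1 by omega, show m + 1 + n = m + n + 1 by omega, qFactorial_succ]
  field_simp [hF, hm, hn]
  ring

end QBinomial

/-- `R((i, j), (i + m, j + n))` in the paper: the probability of the path that first takes its
`m` steps east, then its `n` steps north. -/
def urnPathWeight {K : Type*} [Field K] (q r : K) (j m n : ℕ) : K :=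
  (r * q ^ j) ^ m * ∏ s ∈ Ico j (j + n), (1 - r * q ^ s)

section Urn

variable {K : Type*} [Field K] {q r : K}

@[simp]
theorem urnPathWeight_zero_zero (j : ℕ) : urnPathWeight q r j 0 0 = 1 := by
  simp [urnPathWeight]

theorem urnPathWeight_succ_left (j m n : ℕ) :
    urnPathWeight q r j (m + 1) n = r * q ^ j * urnPathWeight q r j m n := by
  simp only [urnPathWeight, pow_succ]
  ring

theorem urnPathWeight_succ_right (j m n : ℕ) :
    (1 - r * q ^ j) * urnPathWeight q r (j + 1) m n = q ^ m * urnPathWeight q r j m (n + 1) := by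
  rw [urnPathWeight, urnPathWeight, prod_eq_prod_Ico_succ_bot (show j < j + (n + 1) by omega),
    show j + (n + 1) = j + 1 + n by omega, pow_succ, mul_pow, mul_pow, mul_pow]
  ring

variable (hq : ∀ s, 0 < s → q ^ s ≠ 1) {hit : ℕ × ℕ → ℕ × ℕ → K}
  (hself : ∀ x, hit x x = 1)
  (hzero : ∀ x y, ¬(x.1 ≤ y.1 ∧ x.2 ≤ y.2) → hit x y = 0)
  (hrec : ∀ i j : ℕ, ∀ y : ℕ × ℕ, (i, j) ≠ y →
    hit (i, j) y = (r * q ^ j) * hit (i + 1, j) y + (1 - r * q ^ j) * hit (i, j + 1) y)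
include hq hself hzero hrec

theorem hit_eq_qBinomial_mul_urnPathWeight (m n i j : ℕ) :
    hit (i, j) (i + m, j + n) = qBinomial q m n * urnPathWeight q r j m n := by
  induction m generalizing i n j with
  | zero =>
    induction n generalizing j with
    | zero => simp [hself, qBinomial_zero_left hq]
    | succ n ihn =>
      have east : hit (i + 1, j) (i + 0, j + (n + 1)) = 0 := hzero _ _ (by simp)
      have north : hit (i, j + 1) (i + 0, j + (n + 1)) = urnPathWeight q r (j + 1) 0 n := by
        rw [show j + (n + 1) = j + 1 + n by omega, ihn, qBinomial_zero_left hq, one_mul]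
      rw [hrec i j _ (by simp), east, north, qBinomial_zero_left hq, urnPathWeight_succ_right]
      ring
  | succ m ihm =>
    have east (n j : ℕ) :
        hit (i + 1, j) (i + (m + 1), j + n) = qBinomial q m n * urnPathWeight q r j m n := by
      rw [show i + (m + 1) = i + 1 + m by omega, ihm]
    induction n generalizing j with
    | zero =>
      have north : hit (i, j + 1) (i + (m + 1), j + 0) = 0 := hzero _ _ (by simp)
      rw [hrec i j _ (by simp), east, north, qBinomial_zero_right hq, qBinomial_zero_right hq,
        urnPathWeight_succ_left]
      ring
    | succ n ihn =>
      have north : hit (i, j + 1) (i + (m + 1), j + (n + 1)) =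
          qBinomial q (m + 1) n * urnPathWeight q r (j + 1) (m + 1) n := by
        rw [show j + (n + 1) = j + 1 + n by omega, ihn]
      rw [hrec i j _ (by simp), east, north, qBinomial_succ_succ hq, urnPathWeight_succ_left,
        urnPathWeight_succ_left]
      linear_combination (qBinomial q (m + 1) n * r * q ^ (j + 1)) *
        urnPathWeight_succ_right (q := q) (r := r) j m n

end Urn

theorem q_binomial_urn_hitting_probability_general
    (q r : ℝ) (hq0 : 0 < q) (hq1 : q < 1)
    (hit : ℕ × ℕ → ℕ × ℕ → ℝ)
    (hself : ∀ x, hit x x = 1)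
    (hzero : ∀ x y, ¬(x.1 ≤ y.1 ∧ x.2 ≤ y.2) → hit x y = 0)
    (hrec : ∀ i j : ℕ, ∀ y : ℕ × ℕ, (i, j) ≠ y →
      hit (i, j) y = (r * q ^ j) * hit (i + 1, j) y + (1 - r * q ^ j) * hit (i, j + 1) y)
    (i j k l : ℕ) (hik : i ≤ k) (hjl : j ≤ l) :
    hit (i, j) (k, l)
      = (∏ s ∈ Finset.Icc 1 ((k - i) + (l - j)), (1 - q ^ s))
          / ((∏ s ∈ Finset.Icc 1 (k - i), (1 - q ^ s))
              * (∏ s ∈ Finset.Icc 1 (l - j), (1 - q ^ s)))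
        * ((r * q ^ j) ^ (k - i) * ∏ s ∈ Finset.Ico j l, (1 - r * q ^ s)) := by
  obtain ⟨m, rfl⟩ := Nat.exists_eq_add_of_le hik
  obtain ⟨n, rfl⟩ := Nat.exists_eq_add_of_le hjl
  have hq : ∀ s, 0 < s → q ^ s ≠ 1 := fun s hs => (pow_lt_one₀ hq0.le hq1 hs.ne').ne
  simp only [Nat.add_sub_cancel_left]
  exact hit_eq_qBinomial_mul_urnPathWeight hq hself hzero hrec m n i j

/-- **Hitting probabilities of the q-binomial urn.**
The q-binomial urn with parameters `0 < q < 1`, `0 < r < 1` is the Markov chain on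
`ℕ₀ × ℕ₀` with transitions `(i,j) → (i+1,j)` with probability `r qʲ` and
`(i,j) → (i,j+1)` with probability `1 − r qʲ`.  `hit x y` is the probability of ever
visiting `y` from `x`, characterized by `hit x x = 1`, vanishing on non-dominated
states, and the one-step recurrence.  Conclusion: for `i ≤ k`, `j ≤ ℓ`,
`hit (i,j) (k,ℓ)` equals the q-binomial coefficient `binom{(k−i)+(ℓ−j)}{k−i}_q`
times `(r qʲ)^{k−i} (1 − r qʲ)(1 − r q^{j+1})⋯(1 − r q^{ℓ−1})`. -/
theorem q_binomial_urn_hitting_probability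
    (q r : ℝ) (hq0 : 0 < q) (hq1 : q < 1) (hr0 : 0 < r) (hr1 : r < 1)
    (hit : ℕ × ℕ → ℕ × ℕ → ℝ)
    (hself : ∀ x, hit x x = 1)
    (hzero : ∀ x y, ¬(x.1 ≤ y.1 ∧ x.2 ≤ y.2) → hit x y = 0)
    (hrec : ∀ i j : ℕ, ∀ y : ℕ × ℕ, (i, j) ≠ y →
      hit (i, j) y = (r * q ^ j) * hit (i + 1, j) y + (1 - r * q ^ j) * hit (i, j + 1) y)
    (i j k l : ℕ) (hik : i ≤ k) (hjl : j ≤ l) :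
    hit (i, j) (k, l)
      = (∏ s ∈ Finset.Icc 1 ((k - i) + (l - j)), (1 - q ^ s))
          / ((∏ s ∈ Finset.Icc 1 (k - i), (1 - q ^ s))
              * (∏ s ∈ Finset.Icc 1 (l - j), (1 - q ^ s)))
        * ((r * q ^ j) ^ (k - i) * ∏ s ∈ Finset.Ico j l, (1 - r * q ^ s)) :=
  q_binomial_urn_hitting_probability_general q r hq0 hq1 hit hself hzero hrec i j k l hik hjl
end

section
/- A Markov chain started at (0,0) with parameter 0 < q < 1, 0 < r < 1, with transitions (i,j)→(i+1,j) with probability rq^j and (i,j)→(i,j+1) with probability 1−rq^j, almost surely has eventually constant first coordinate: with probability one there exists N such that the first coordinate never changes after time N. -/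
/-!
Call the second coordinate the level. On every cylinder the chain steps east with probability
`r qʲ` and north with probability `1 - r qʲ`; these add up to one, so almost every path makes
only these two moves and its level never decreases. A path steps north from level `j` at most
once, hence the expected time spent at level `j` is at most `1 / (1 - r qʲ) ≤ 1 / (1 - r)`, and
the expected number of east steps is at most `∑ⱼ r qʲ / (1 - r) < ∞`. By Borel–Cantelli almost
every path makes only finitely many east steps, after which its first coordinate is constant.
-/

open MeasureTheory Set Filter

def pathCylinder {α : Type*} (s : ℕ → α) (n : ℕ) : Set (ℕ → α) := {ω | ∀ m ≤ n, ω m = s m}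

lemma preimage_frestrictLe_singleton {α : Type*} (s : ℕ → α) (n : ℕ) :
    Preorder.frestrictLe (π := fun _ => α) n ⁻¹' {Preorder.frestrictLe n s}
      = pathCylinder s n := by
  ext ω
  simp [pathCylinder, funext_iff]

lemma pathCylinder_inter_setOf_succ_eq {α : Type*} (s : ℕ → α) (n : ℕ) (f : α → α) :
    pathCylinder s n ∩ {ω | ω (n + 1) = f (ω n)}
      = {ω | (∀ m ≤ n, ω m = s m) ∧ ω (n + 1) = f (s n)} := by
  ext ω
  exact and_congr_right fun hω => by rw [mem_ofPred_eq, hω n le_rfl]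

-- `P` is the countable disjoint union of the cylinders it meets, the fibres of `frestrictLe n`.
lemma measure_inter_eq_mul_of_forall_pathCylinder {α : Type*} [MeasurableSpace α]
    [Countable α] [MeasurableSingletonClass α] {μ : Measure (ℕ → α)} {n : ℕ}
    {P B : Set (ℕ → α)} {c : ENNReal}
    (hP : ∀ ω ω', (∀ m ≤ n, ω m = ω' m) → ω ∈ P → ω' ∈ P)
    (h : ∀ s ∈ P, μ (pathCylinder s n ∩ B) = c * μ (pathCylinder s n)) :
    μ (P ∩ B) = c * μ P := by
  set f := Preorder.frestrictLe (π := fun _ : ℕ => α) n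
  have hPf : f ⁻¹' (f '' P) = P := by
    refine Subset.antisymm ?_ (subset_preimage_image f P)
    rintro ω ⟨s, hs, hsω⟩
    exact hP s ω (fun m hm => congrFun hsω ⟨m, Finset.mem_Iic.2 hm⟩) hs
  have hcount : (f '' P).Countable := Set.to_countable _
  have hfib : ∀ y ∈ f '' P, MeasurableSet (f ⁻¹' {y}) := fun y _ =>
    Preorder.measurable_frestrictLe n (measurableSet_singleton y)
  calc μ (P ∩ B) = ∑' y : f '' P, μ.restrict B (f ⁻¹' {↑y}) := by
        rw [tsum_measure_preimage_singleton hcount hfib, hPf,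
          Measure.restrict_apply (hPf ▸ Preorder.measurable_frestrictLe n hcount.measurableSet)]
    _ = ∑' y : f '' P, c * μ (f ⁻¹' {↑y}) := by
        refine tsum_congr ?_
        rintro ⟨_, s, hs, rfl⟩
        rw [Measure.restrict_apply (hfib _ ⟨s, hs, rfl⟩)]
        simpa only [f, preimage_frestrictLe_singleton] using h s hs
    _ = c * μ P := by
        rw [ENNReal.tsum_mul_left, tsum_measure_preimage_singleton hcount hfib, hPf]

def eastStep (n : ℕ) : Set (ℕ → ℕ × ℕ) := {ω | ω (n + 1) = ((ω n).1 + 1, (ω n).2)}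

def northStep (n : ℕ) : Set (ℕ → ℕ × ℕ) := {ω | ω (n + 1) = ((ω n).1, (ω n).2 + 1)}

lemma mem_eastStep {ω : ℕ → ℕ × ℕ} {n : ℕ} :
    ω ∈ eastStep n ↔ ω (n + 1) = ((ω n).1 + 1, (ω n).2) := Iff.rfl

lemma mem_northStep {ω : ℕ → ℕ × ℕ} {n : ℕ} :
    ω ∈ northStep n ↔ ω (n + 1) = ((ω n).1, (ω n).2 + 1) := Iff.rfl

lemma measurableSet_eastStep (n : ℕ) : MeasurableSet (eastStep n) :=
  measurableSet_eq_fun (by fun_prop) (by fun_prop)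

lemma measurableSet_northStep (n : ℕ) : MeasurableSet (northStep n) :=
  measurableSet_eq_fun (by fun_prop) (by fun_prop)

lemma measurableSet_setOf_snd_eq (n j : ℕ) : MeasurableSet {ω : ℕ → ℕ × ℕ | (ω n).2 = j} :=
  measurableSet_eq_fun (by fun_prop) (by fun_prop)

lemma disjoint_eastStep_northStep (n : ℕ) : Disjoint (eastStep n) (northStep n) := by
  refine disjoint_left.2 fun ω hE hN => ?_
  simpa using (mem_eastStep.1 hE).symm.trans (mem_northStep.1 hN)

lemma monotone_snd_of_forall_step {ω : ℕ → ℕ × ℕ}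
    (hω : ∀ n, ω ∈ eastStep n ∨ ω ∈ northStep n) : Monotone fun n => (ω n).2 :=
  monotone_nat_of_le_succ fun n => by
    rcases hω n with h | h
    · simp [mem_eastStep.1 h]
    · simp [mem_northStep.1 h]

lemma snd_lt_snd_of_mem_northStep {ω : ℕ → ℕ × ℕ}
    (hω : ∀ n, ω ∈ eastStep n ∨ ω ∈ northStep n) {n m : ℕ} (hN : ω ∈ northStep n)
    (hnm : n < m) : (ω n).2 < (ω m).2 :=
  calc (ω n).2 < (ω (n + 1)).2 := by simp [mem_northStep.1 hN]
    _ ≤ (ω m).2 := monotone_snd_of_forall_step hω hnm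

lemma tsum_measure_level_inter_northStep_le_one {μ : Measure (ℕ → ℕ × ℕ)}
    [IsProbabilityMeasure μ] (hgood : ∀ᵐ ω ∂μ, ∀ n, ω ∈ eastStep n ∨ ω ∈ northStep n)
    (j : ℕ) : ∑' n, μ ({ω | (ω n).2 = j} ∩ northStep n) ≤ 1 := by
  refine (tsum_meas_le_meas_iUnion_of_disjoint₀ μ (fun n => ((measurableSet_setOf_snd_eq n j).inter
    (measurableSet_northStep n)).nullMeasurableSet) fun n m hnm => ?_).trans prob_le_one
  refine measure_mono_null ?_ (ae_iff.1 hgood)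
  rintro ω ⟨⟨hn, hnN⟩, hm, hmN⟩ hω
  rcases hnm.lt_or_gt with hlt | hlt
  · exact (snd_lt_snd_of_mem_northStep hω hnN hlt).ne (hn.trans hm.symm)
  · exact (snd_lt_snd_of_mem_northStep hω hmN hlt).ne (hm.trans hn.symm)

lemma measure_eq_tsum_measure_level_inter (μ : Measure (ℕ → ℕ × ℕ)) (n : ℕ)
    {B : Set (ℕ → ℕ × ℕ)} (hB : MeasurableSet B) :
    μ B = ∑' j, μ ({ω | (ω n).2 = j} ∩ B) := by
  rw [← measure_iUnion, ← iUnion_inter, iUnion_eq_univ_iff.2 fun ω => ⟨(ω n).2, rfl⟩, univ_inter]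
  · exact fun i j hij => disjoint_left.2 fun ω hi hj => hij (hi.1.symm.trans hj.1)
  · exact fun j => (measurableSet_setOf_snd_eq n j).inter hB

structure IsQBinomialUrn (q r : ℝ) (μ : Measure (ℕ → ℕ × ℕ)) : Prop where
  east (n : ℕ) (s : ℕ → ℕ × ℕ) : μ (pathCylinder s n ∩ eastStep n)
    = ENNReal.ofReal (r * q ^ (s n).2) * μ (pathCylinder s n)
  north (n : ℕ) (s : ℕ → ℕ × ℕ) : μ (pathCylinder s n ∩ northStep n)
    = ENNReal.ofReal (1 - r * q ^ (s n).2) * μ (pathCylinder s n)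

namespace IsQBinomialUrn

variable {q r : ℝ} {μ : Measure (ℕ → ℕ × ℕ)}

lemma measure_level_inter_eastStep (h : IsQBinomialUrn q r μ) (n j : ℕ) :
    μ ({ω | (ω n).2 = j} ∩ eastStep n) = ENNReal.ofReal (r * q ^ j) * μ {ω | (ω n).2 = j} :=
  measure_inter_eq_mul_of_forall_pathCylinder
    (fun ω ω' hωω' (hω : (ω n).2 = j) => show (ω' n).2 = j by rw [← hωω' n le_rfl, hω])
    fun s hs => hs ▸ h.east n s

lemma measure_level_inter_northStep (h : IsQBinomialUrn q r μ) (n j : ℕ) :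
    μ ({ω | (ω n).2 = j} ∩ northStep n)
      = ENNReal.ofReal (1 - r * q ^ j) * μ {ω | (ω n).2 = j} :=
  measure_inter_eq_mul_of_forall_pathCylinder
    (fun ω ω' hωω' (hω : (ω n).2 = j) => show (ω' n).2 = j by rw [← hωω' n le_rfl, hω])
    fun s hs => hs ▸ h.north n s

lemma ae_mem_eastStep_or_northStep [IsFiniteMeasure μ] (h : IsQBinomialUrn q r μ)
    (hq0 : 0 ≤ q) (hq1 : q ≤ 1) (hr0 : 0 ≤ r) (hr1 : r ≤ 1) :
    ∀ᵐ ω ∂μ, ∀ n, ω ∈ eastStep n ∨ ω ∈ northStep n := by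
  refine ae_all_iff.2 fun n => ?_
  have hlevel : ∀ j, μ ({ω | (ω n).2 = j} \ (eastStep n ∪ northStep n)) = 0 := by
    intro j
    have hprob : r * q ^ j ≤ 1 := mul_le_one₀ hr1 (by positivity) (pow_le_one₀ hq0 hq1)
    have hsplit : μ ({ω | (ω n).2 = j} ∩ (eastStep n ∪ northStep n))
        = μ {ω | (ω n).2 = j} := by
      rw [inter_union_distrib_left, measure_union
        ((disjoint_eastStep_northStep n).mono inter_subset_right inter_subset_right)
        ((measurableSet_setOf_snd_eq n j).inter (measurableSet_northStep n)),
        h.measure_level_inter_eastStep, h.measure_level_inter_northStep, ← add_mul,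
        ← ENNReal.ofReal_add (by positivity) (by linarith), add_sub_cancel, ENNReal.ofReal_one,
        one_mul]
    rw [← sdiff_self_inter, measure_sdiff inter_subset_left
      ((measurableSet_setOf_snd_eq n j).inter
        ((measurableSet_eastStep n).union (measurableSet_northStep n))).nullMeasurableSet
      (measure_ne_top μ _), hsplit, tsub_self]
  refine measure_mono_null (fun ω hω => ?_) (measure_iUnion_null hlevel)
  exact mem_iUnion.2 ⟨(ω n).2, rfl, hω⟩

-- The chain leaves level `j` at most once, and does so with probability `1 - r qʲ` per visit.
lemma ofReal_mul_tsum_measure_level_le_one [IsProbabilityMeasure μ] (h : IsQBinomialUrn q r μ)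
    (hgood : ∀ᵐ ω ∂μ, ∀ n, ω ∈ eastStep n ∨ ω ∈ northStep n) (j : ℕ) :
    ENNReal.ofReal (1 - r * q ^ j) * ∑' n, μ {ω | (ω n).2 = j} ≤ 1 := by
  rw [← ENNReal.tsum_mul_left]
  simpa only [h.measure_level_inter_northStep] using
    tsum_measure_level_inter_northStep_le_one hgood j

lemma tsum_measure_eastStep_ne_top [IsProbabilityMeasure μ] (h : IsQBinomialUrn q r μ)
    (hq0 : 0 ≤ q) (hq1 : q < 1) (hr0 : 0 ≤ r) (hr1 : r < 1) :
    ∑' n, μ (eastStep n) ≠ ⊤ := by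
  have hgood := h.ae_mem_eastStep_or_northStep hq0 hq1.le hr0 hr1.le
  have hsum : ∑' n, μ (eastStep n)
      = ∑' j, ENNReal.ofReal (r * q ^ j) * ∑' n, μ {ω | (ω n).2 = j} := by
    rw [tsum_congr fun n => measure_eq_tsum_measure_level_inter μ n (measurableSet_eastStep n),
      ENNReal.tsum_comm]
    simp_rw [h.measure_level_inter_eastStep, ENNReal.tsum_mul_left]
  have hbound : ENNReal.ofReal (1 - r) * ∑' n, μ (eastStep n)
      ≤ ENNReal.ofReal (∑' j, r * q ^ j) := by
    rw [hsum, ← ENNReal.tsum_mul_left, ENNReal.ofReal_tsum_of_nonneg (fun j => by positivity)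
      ((summable_geometric_of_lt_one hq0 hq1).mul_left r)]
    refine ENNReal.tsum_le_tsum fun j => ?_
    have hrq : r * q ^ j ≤ r := mul_le_of_le_one_right hr0 (pow_le_one₀ hq0 hq1.le)
    calc ENNReal.ofReal (1 - r) * (ENNReal.ofReal (r * q ^ j) * ∑' n, μ {ω | (ω n).2 = j})
        = ENNReal.ofReal (r * q ^ j) * (ENNReal.ofReal (1 - r) * ∑' n, μ {ω | (ω n).2 = j}) :=
          mul_left_comm _ _ _
      _ ≤ ENNReal.ofReal (r * q ^ j)
          * (ENNReal.ofReal (1 - r * q ^ j) * ∑' n, μ {ω | (ω n).2 = j}) := by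
          gcongr
      _ ≤ ENNReal.ofReal (r * q ^ j) :=
          mul_le_of_le_one_right' (h.ofReal_mul_tsum_measure_level_le_one hgood j)
  intro htop
  rw [htop, ENNReal.mul_top (by simpa using hr1)] at hbound
  exact ENNReal.ofReal_ne_top (top_le_iff.1 hbound)

end IsQBinomialUrn

theorem q_binomial_urn_first_coordinate_eventually_constant_general
    (q r : ℝ) (hq0 : 0 < q) (hq1 : q < 1) (hr0 : 0 < r) (hr1 : r < 1)
    (μ : Measure (ℕ → ℕ × ℕ)) [IsProbabilityMeasure μ]
    (heast : ∀ n : ℕ, ∀ s : ℕ → ℕ × ℕ,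
      μ {ω | (∀ m ≤ n, ω m = s m) ∧ ω (n + 1) = ((s n).1 + 1, (s n).2)}
        = ENNReal.ofReal (r * q ^ (s n).2) * μ {ω | ∀ m ≤ n, ω m = s m})
    (hnorth : ∀ n : ℕ, ∀ s : ℕ → ℕ × ℕ,
      μ {ω | (∀ m ≤ n, ω m = s m) ∧ ω (n + 1) = ((s n).1, (s n).2 + 1)}
        = ENNReal.ofReal (1 - r * q ^ (s n).2) * μ {ω | ∀ m ≤ n, ω m = s m}) :
    μ {ω | ∃ N : ℕ, ∀ n, N ≤ n → (ω n).1 = (ω N).1} = 1 := by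
  have hμ : IsQBinomialUrn q r μ :=
    ⟨fun n s => (congrArg μ (pathCylinder_inter_setOf_succ_eq s n
        fun p => (p.1 + 1, p.2))).trans (heast n s),
      fun n s => (congrArg μ (pathCylinder_inter_setOf_succ_eq s n
        fun p => (p.1, p.2 + 1))).trans (hnorth n s)⟩
  have hgood := hμ.ae_mem_eastStep_or_northStep hq0.le hq1.le hr0.le hr1.le
  have hfinite := ae_eventually_notMem (hμ.tsum_measure_eastStep_ne_top hq0.le hq1 hr0.le hr1)
  refine (measure_congr (eventuallyEq_univ.2 ?_)).trans measure_univ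
  filter_upwards [hgood, hfinite] with ω hω hE
  obtain ⟨N, hN⟩ := eventually_atTop.1 hE
  refine ⟨N, fun n hn => ?_⟩
  induction n, hn using Nat.le_induction with
  | base => rfl
  | succ n hn ih => rw [mem_northStep.1 ((hω n).resolve_left (hN n hn)), ih]

/-- **Eventual constancy of the first coordinate of the q-binomial urn.**
Let `μ` be the law on path space `(ℕ → ℕ₀ × ℕ₀)` of a Markov chain started at `(0,0)`
which, from a state `(i,j)`, moves to `(i+1,j)` with probability `r qʲ` and to
`(i,j+1)` with probability `1 − r qʲ` (so with `μ`-probability one only these two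
moves occur).  Then, almost surely, the first coordinate is eventually constant:
with probability one there is an `N` such that the first coordinate never changes
after time `N`. -/
theorem q_binomial_urn_first_coordinate_eventually_constant
    (q r : ℝ) (hq0 : 0 < q) (hq1 : q < 1) (hr0 : 0 < r) (hr1 : r < 1)
    (μ : Measure (ℕ → ℕ × ℕ)) [IsProbabilityMeasure μ]
    (h0 : μ {ω | ω 0 = (0, 0)} = 1)
    (heast : ∀ n : ℕ, ∀ s : ℕ → ℕ × ℕ,
      μ {ω | (∀ m ≤ n, ω m = s m) ∧ ω (n + 1) = ((s n).1 + 1, (s n).2)}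
        = ENNReal.ofReal (r * q ^ (s n).2) * μ {ω | ∀ m ≤ n, ω m = s m})
    (hnorth : ∀ n : ℕ, ∀ s : ℕ → ℕ × ℕ,
      μ {ω | (∀ m ≤ n, ω m = s m) ∧ ω (n + 1) = ((s n).1, (s n).2 + 1)}
        = ENNReal.ofReal (1 - r * q ^ (s n).2) * μ {ω | ∀ m ≤ n, ω m = s m}) :
    μ {ω | ∃ N : ℕ, ∀ n, N ≤ n → (ω n).1 = (ω N).1} = 1 :=
  q_binomial_urn_first_coordinate_eventually_constant_general q r hq0 hq1 hr0 hr1 μ heast hnorth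
end
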